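/- Let w_1,…,w_d, v_1,…,v_d, and the dD entries of the vectors u_1,…,u_d ∈ ℝ^D all be independent random variables, each uniformly distributed on [−1, 1]. Then for any fixed x ∈ ℝ^D and any fixed j ∈ {1,…,d}, E[ (⟨u_j, x⟩ + v_j)²·Σ_{j'=1}^d w_{j'}²·(⟨u_{j'}, x⟩ + v_{j'})² ] = (1/3)·[ (1/3)·‖x‖₂⁴ − (2/15)·‖x‖₄⁴ + (2/3)·‖x‖₂² + 1/5 ] + ((d−1)/3)·((‖x‖₂² + 1)/3)². -/

import Mathlib

/-!
Write `A_k = ⟨u_k, x⟩ + v_k`. Since `w` is independent of `(v, u)` and `E[w_{j'}²] = 1/3`, the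
expectation is `(1/3) Σ_{j'} E[A_j² A_{j'}²]`. The pairs `(v_k, u_k)` are independent across `k`,
and each `A_k` is the linear form with coefficient vector `(1, x)` in `D + 1` independent uniform
variables. Hence `E[A_j² A_{j'}²] = E[A²]²` for `j' ≠ j`, while the diagonal term is `E[A⁴]`.
The second and fourth moments of a linear form `⟨y, c⟩` in independent uniform variables,
`‖c‖₂²/3` and `‖c‖₄⁴/5 + (‖c‖₂⁴ - ‖c‖₄⁴)/3`, follow by induction on the dimension from the
binomial expansion, since the odd moments of the uniform law vanish.
-/

open MeasureTheory Real

/-- The uniform probability distribution on `[-1, 1]`. -/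
noncomputable def unif : Measure ℝ :=
  (2 : ENNReal)⁻¹ • (volume.restrict (Set.Icc (-1 : ℝ) 1))

open ProbabilityTheory Finset

section ConcentratedOnCompact

variable {X Y : Type*} [TopologicalSpace X] [MeasurableSpace X]
  [TopologicalSpace Y] [MeasurableSpace Y]

def ConcentratedOnCompact (μ : Measure X) : Prop :=
  ∃ K, IsCompact K ∧ ∀ᵐ x ∂μ, x ∈ K

theorem Continuous.integrable_of_concentratedOnCompact [OpensMeasurableSpace X] [T2Space X]
    {μ : Measure X} [IsFiniteMeasure μ] (hμ : ConcentratedOnCompact μ) {f : X → ℝ}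
    (hf : Continuous f) : Integrable f μ := by
  obtain ⟨K, hK, hae⟩ := hμ
  rw [← Measure.restrict_eq_self_of_ae_mem hae]
  exact hf.continuousOn.integrableOn_compact hK

theorem ConcentratedOnCompact.prod {μ : Measure X} {ν : Measure Y} [SFinite ν]
    (hμ : ConcentratedOnCompact μ) (hν : ConcentratedOnCompact ν) :
    ConcentratedOnCompact (μ.prod ν) := by
  obtain ⟨K, hK, hμK⟩ := hμ
  obtain ⟨L, hL, hνL⟩ := hν
  refine ⟨K ×ˢ L, hK.prod hL, ?_⟩
  filter_upwards [Measure.quasiMeasurePreserving_fst.ae hμK,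
    Measure.quasiMeasurePreserving_snd.ae hνL] with p h1 h2 using ⟨h1, h2⟩

theorem ConcentratedOnCompact.pi {ι : Type*} [Fintype ι] {μ : ι → Measure X}
    [∀ i, SigmaFinite (μ i)] (hμ : ∀ i, ConcentratedOnCompact (μ i)) :
    ConcentratedOnCompact (Measure.pi μ) := by
  choose K hK hμK using hμ
  exact ⟨Set.univ.pi K, isCompact_univ_pi hK,
    Measure.ae_pi_le_pi (Filter.pi_mem_pi Set.finite_univ fun i _ => hμK i)⟩

end ConcentratedOnCompact

instance : IsProbabilityMeasure unif :=
  ⟨by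
    simp only [unif, Measure.smul_apply, Measure.restrict_apply_univ, Real.volume_Icc]
    norm_num [ENNReal.inv_mul_cancel]⟩

theorem concentratedOnCompact_unif : ConcentratedOnCompact unif :=
  ⟨Set.Icc (-1) 1, isCompact_Icc, by
    simp only [unif]
    exact Measure.ae_smul_measure (ae_restrict_mem measurableSet_Icc) _⟩

theorem integral_pow_unif (k : ℕ) :
    ∫ t, t ^ k ∂unif = (1 - (-1 : ℝ) ^ (k + 1)) / (2 * (k + 1)) := by
  rw [unif, integral_smul_measure, integral_Icc_eq_integral_Ioc,
    ← intervalIntegral.integral_of_le (by norm_num), integral_pow]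
  simp [ENNReal.toReal_inv]
  field_simp

theorem integral_comp_eval_mul_comp_eval {ι : Type*} [Fintype ι] {X : ι → Type*}
    [∀ i, MeasurableSpace (X i)] {μ : ∀ i, Measure (X i)} [∀ i, IsProbabilityMeasure (μ i)]
    {i j : ι} (hij : i ≠ j) {f : X i → ℝ} {g : X j → ℝ} (hf : Measurable f)
    (hg : Measurable g) :
    ∫ y, f (y i) * g (y j) ∂Measure.pi μ = (∫ a, f a ∂μ i) * ∫ b, g b ∂μ j := by
  have hind : IndepFun (fun y : ∀ i, X i => f (y i)) (fun y => g (y j)) (Measure.pi μ) :=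
    ((iIndepFun_pi (X := fun _ => id) fun _ => aemeasurable_id).indepFun hij).comp hf hg
  rw [hind.integral_fun_mul_eq_mul_integral
      (hf.comp (measurable_pi_apply i)).aestronglyMeasurable
      (hg.comp (measurable_pi_apply j)).aestronglyMeasurable,
    integral_comp_eval hf.aestronglyMeasurable, integral_comp_eval hg.aestronglyMeasurable]

theorem integral_fin_succ_pi {n : ℕ} {X : Type*} [MeasurableSpace X] (μ : Measure X)
    [SigmaFinite μ] (F : (Fin (n + 1) → X) → ℝ) :
    ∫ y, F y ∂Measure.pi (fun _ => μ) =
      ∫ p, F (Fin.cons p.1 p.2) ∂μ.prod (Measure.pi fun _ : Fin n => μ) := by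
  rw [← (measurePreserving_piFinSuccAbove (fun _ => μ) 0).symm.integral_comp']
  simp [MeasurableEquiv.piFinSuccAbove_symm_apply, Fin.insertNthEquiv]

theorem integral_add_pow_prod {α β : Type*} [MeasurableSpace α] [MeasurableSpace β]
    {μ : Measure α} {ν : Measure β} [SFinite μ] [SFinite ν] {f : α → ℝ} {g : β → ℝ}
    (hf : ∀ k : ℕ, Integrable (fun a => f a ^ k) μ)
    (hg : ∀ k : ℕ, Integrable (fun b => g b ^ k) ν) (n : ℕ) :
    ∫ p, (f p.1 + g p.2) ^ n ∂μ.prod ν =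
      ∑ m ∈ range (n + 1), (∫ a, f a ^ m ∂μ) * (∫ b, g b ^ (n - m) ∂ν) * n.choose m := by
  simp_rw [add_pow]
  rw [integral_finsetSum _ fun m _ => ((hf m).mul_prod (hg (n - m))).mul_const _]
  simp_rw [integral_mul_const]
  exact sum_congr rfl fun m _ => by
    rw [integral_prod_mul (fun a => f a ^ m) (fun b => g b ^ (n - m))]

noncomputable abbrev unifCube (n : ℕ) : Measure (Fin n → ℝ) := Measure.pi fun _ => unif

theorem concentratedOnCompact_unifCube (n : ℕ) : ConcentratedOnCompact (unifCube n) :=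
  .pi fun _ => concentratedOnCompact_unif

theorem integral_sq_unifCube_eval {n : ℕ} (k : Fin n) :
    ∫ w, w k ^ 2 ∂unifCube n = 1 / 3 := by
  rw [integral_comp_eval (μ := fun _ => unif) (f := fun t : ℝ => t ^ 2) (by fun_prop),
    integral_pow_unif]
  norm_num

section LinearForm

variable {n : ℕ}

theorem integrable_linearForm_pow (x : Fin n → ℝ) (k : ℕ) :
    Integrable (fun u => (∑ i, u i * x i) ^ k) (unifCube n) :=
  (by fun_prop : Continuous _).integrable_of_concentratedOnCompact
    (concentratedOnCompact_unifCube n)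

theorem integral_linearForm_pow_succ (x : Fin (n + 1) → ℝ) (k : ℕ) :
    ∫ u, (∑ i, u i * x i) ^ k ∂unifCube (n + 1) =
      ∑ m ∈ range (k + 1), (x 0 ^ m * ∫ t, t ^ m ∂unif) *
        (∫ u, (∑ i, u i * x i.succ) ^ (k - m) ∂unifCube n) * k.choose m := by
  rw [integral_fin_succ_pi]
  simp only [Fin.sum_univ_succ, Fin.cons_zero, Fin.cons_succ]
  rw [integral_add_pow_prod (f := fun t => t * x 0)
    (fun m => (by fun_prop : Continuous _).integrable_of_concentratedOnCompact
      concentratedOnCompact_unif) (integrable_linearForm_pow _)]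
  simp_rw [mul_pow, integral_mul_const, mul_comm]

theorem integral_linearForm_sq (x : Fin n → ℝ) :
    ∫ u, (∑ i, u i * x i) ^ 2 ∂unifCube n = (∑ i, x i ^ 2) / 3 := by
  induction n with
  | zero => simp
  | succ n ih =>
    rw [integral_linearForm_pow_succ]
    norm_num [sum_range_succ, integral_pow_unif, ih, Fin.sum_univ_succ]
    ring

theorem integral_linearForm_pow_four (x : Fin n → ℝ) :
    ∫ u, (∑ i, u i * x i) ^ 4 ∂unifCube n =
      (∑ i, x i ^ 4) / 5 + ((∑ i, x i ^ 2) ^ 2 - ∑ i, x i ^ 4) / 3 := by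
  induction n with
  | zero => simp
  | succ n ih =>
    rw [integral_linearForm_pow_succ]
    norm_num [sum_range_succ, integral_pow_unif, ih, integral_linearForm_sq, Fin.sum_univ_succ,
      Nat.choose]
    ring

end LinearForm

section AffineForm

variable {n : ℕ}

theorem integral_affineForm_pow (x : Fin n → ℝ) (k : ℕ) :
    ∫ p, (∑ i, p.2 i * x i + p.1) ^ k ∂unif.prod (unifCube n) =
      ∫ u, (∑ i, u i * (Fin.cons 1 x : Fin (n + 1) → ℝ) i) ^ k ∂unifCube (n + 1) := by
  rw [integral_fin_succ_pi]
  simp only [Fin.sum_univ_succ, Fin.cons_zero, Fin.cons_succ, mul_one, add_comm]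

theorem integral_affineForm_sq (x : Fin n → ℝ) :
    ∫ p, (∑ i, p.2 i * x i + p.1) ^ 2 ∂unif.prod (unifCube n) = ((∑ i, x i ^ 2) + 1) / 3 := by
  rw [integral_affineForm_pow, integral_linearForm_sq]
  simp [Fin.sum_univ_succ, add_comm]

theorem integral_affineForm_pow_four (x : Fin n → ℝ) :
    ∫ p, (∑ i, p.2 i * x i + p.1) ^ 4 ∂unif.prod (unifCube n) =
      (1 / 3) * (∑ i, x i ^ 2) ^ 2 - (2 / 15) * (∑ i, x i ^ 4) + (2 / 3) * (∑ i, x i ^ 2) +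
        1 / 5 := by
  rw [integral_affineForm_pow, integral_linearForm_pow_four]
  simp only [Fin.sum_univ_succ, Fin.cons_zero, Fin.cons_succ, one_pow]
  ring

end AffineForm

theorem integral_prod_pi_eq_integral_pi_prod {ι α β : Type*} [Fintype ι] [MeasurableSpace α]
    [MeasurableSpace β] (μ : ι → Measure α) (ν : ι → Measure β) [∀ i, SigmaFinite (μ i)]
    [∀ i, SigmaFinite (ν i)] (F : (ι → α) × (ι → β) → ℝ) :
    ∫ q, F q ∂(Measure.pi μ).prod (Measure.pi ν) =
      ∫ y, F (fun i => (y i).1, fun i => (y i).2) ∂Measure.pi fun i => (μ i).prod (ν i) :=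
  ((measurePreserving_arrowProdEquivProdArrow α β ι μ ν).integral_comp' F).symm

section Neurons

variable {d D : ℕ} (x : Fin D → ℝ)

theorem integral_affineForm_sq_mul_sq_of_ne {j j' : Fin d} (hjj' : j ≠ j') :
    ∫ q, (∑ i, q.2 j i * x i + q.1 j) ^ 2 * (∑ i, q.2 j' i * x i + q.1 j') ^ 2
        ∂(unifCube d).prod (Measure.pi fun _ : Fin d => unifCube D) =
      (((∑ i, x i ^ 2) + 1) / 3) ^ 2 := by
  rw [integral_prod_pi_eq_integral_pi_prod]
  dsimp only
  rw [integral_comp_eval_mul_comp_eval (μ := fun _ => unif.prod (unifCube D)) hjj'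
      (f := fun p : ℝ × (Fin D → ℝ) => (∑ i, p.2 i * x i + p.1) ^ 2)
      (g := fun p : ℝ × (Fin D → ℝ) => (∑ i, p.2 i * x i + p.1) ^ 2) (by fun_prop) (by fun_prop),
    integral_affineForm_sq, sq]

theorem integral_affineForm_sq_mul_sq_self (j : Fin d) :
    ∫ q, (∑ i, q.2 j i * x i + q.1 j) ^ 2 * (∑ i, q.2 j i * x i + q.1 j) ^ 2
        ∂(unifCube d).prod (Measure.pi fun _ : Fin d => unifCube D) =
      (1 / 3) * (∑ i, x i ^ 2) ^ 2 - (2 / 15) * (∑ i, x i ^ 4) + (2 / 3) * (∑ i, x i ^ 2) +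
        1 / 5 := by
  simp_rw [← pow_add]
  rw [integral_prod_pi_eq_integral_pi_prod]
  dsimp only
  norm_num only
  rw [integral_comp_eval (μ := fun _ => unif.prod (unifCube D)) (i := j)
      (f := fun p : ℝ × (Fin D → ℝ) => (∑ i, p.2 i * x i + p.1) ^ 4) (by fun_prop),
    integral_affineForm_pow_four]

end Neurons

theorem stmt_7_general (D d : ℕ) (x : Fin D → ℝ) (j : Fin d) :
    ∫ p : (Fin d → ℝ) × (Fin d → ℝ) × (Fin d → Fin D → ℝ),
        ((∑ i, p.2.2 j i * x i) + p.2.1 j) ^ 2 *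
          ∑ j', (p.1 j') ^ 2 * ((∑ i, p.2.2 j' i * x i) + p.2.1 j') ^ 2
        ∂((Measure.pi fun _ : Fin d => unif).prod
          ((Measure.pi fun _ : Fin d => unif).prod
            (Measure.pi fun _ : Fin d => Measure.pi fun _ : Fin D => unif))) =
      (1 / 3) * ((1 / 3) * (∑ i, x i ^ 2) ^ 2 - (2 / 15) * (∑ i, x i ^ 4) +
          (2 / 3) * (∑ i, x i ^ 2) + 1 / 5) +
        (((d : ℝ) - 1) / 3) * (((∑ i, x i ^ 2) + 1) / 3) ^ 2 := by
  set F : Fin d → (Fin d → ℝ) × (Fin d → Fin D → ℝ) → ℝ := fun k q =>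
    (∑ i, q.2 j i * x i + q.1 j) ^ 2 * (∑ i, q.2 k i * x i + q.1 k) ^ 2
  have hsplit : ∀ p : (Fin d → ℝ) × (Fin d → ℝ) × (Fin d → Fin D → ℝ),
      ((∑ i, p.2.2 j i * x i) + p.2.1 j) ^ 2 *
        ∑ j', (p.1 j') ^ 2 * ((∑ i, p.2.2 j' i * x i) + p.2.1 j') ^ 2 =
      ∑ j', p.1 j' ^ 2 * F j' p.2 := fun p => by
    rw [mul_sum]; exact sum_congr rfl fun _ _ => by ring
  have hint : ∀ k, Integrable (fun p : (Fin d → ℝ) × (Fin d → ℝ) × (Fin d → Fin D → ℝ) =>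
      p.1 k ^ 2 * F k p.2) ((unifCube d).prod ((unifCube d).prod
        (Measure.pi fun _ : Fin d => unifCube D))) := fun k =>
    (by fun_prop : Continuous _).integrable_of_concentratedOnCompact
      ((concentratedOnCompact_unifCube d).prod ((concentratedOnCompact_unifCube d).prod
        (.pi fun _ => concentratedOnCompact_unifCube D)))
  rw [integral_congr_ae (Filter.Eventually.of_forall hsplit),
    integral_finsetSum _ fun k _ => hint k,
    sum_congr rfl fun k _ => integral_prod_mul (fun w : Fin d → ℝ => w k ^ 2) (F k)]
  simp only [integral_sq_unifCube_eval]
  rw [← mul_sum, ← add_sum_erase _ _ (mem_univ j), integral_affineForm_sq_mul_sq_self,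
    sum_congr rfl fun k hk => integral_affineForm_sq_mul_sq_of_ne x (ne_of_mem_erase hk).symm,
    sum_const, card_erase_of_mem (mem_univ j), card_univ, Fintype.card_fin, nsmul_eq_mul,
    Nat.cast_pred j.pos]
  ring

/-- if `w_1,…,w_d`, `v_1,…,v_d` and the `dD` entries of `u_1,…,u_d ∈ ℝ^D`
are all independent, each uniform on `[-1,1]`, then for fixed `x ∈ ℝ^D` and `j`,
`E[(⟨u_j,x⟩ + v_j)²·Σ_{j'} w_{j'}²·(⟨u_{j'},x⟩ + v_{j'})²]
 = (1/3)·[(1/3)‖x‖₂⁴ − (2/15)‖x‖₄⁴ + (2/3)‖x‖₂² + 1/5] + ((d−1)/3)·((‖x‖₂² + 1)/3)²`. -/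
theorem stmt_7 (D d : ℕ) (hD : 1 ≤ D) (hd : 1 ≤ d) (x : Fin D → ℝ) (j : Fin d) :
    ∫ p : (Fin d → ℝ) × (Fin d → ℝ) × (Fin d → Fin D → ℝ),
        ((∑ i, p.2.2 j i * x i) + p.2.1 j) ^ 2 *
          ∑ j', (p.1 j') ^ 2 * ((∑ i, p.2.2 j' i * x i) + p.2.1 j') ^ 2
        ∂((Measure.pi fun _ : Fin d => unif).prod
          ((Measure.pi fun _ : Fin d => unif).prod
            (Measure.pi fun _ : Fin d => Measure.pi fun _ : Fin D => unif))) =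
      (1 / 3) * ((1 / 3) * (∑ i, x i ^ 2) ^ 2 - (2 / 15) * (∑ i, x i ^ 4) +
          (2 / 3) * (∑ i, x i ^ 2) + 1 / 5) +
        (((d : ℝ) - 1) / 3) * (((∑ i, x i ^ 2) + 1) / 3) ^ 2 :=
  stmt_7_general D d x j
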